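/- arXiv:1609.06295 — 3 statements merged into one kernel-verified Lean document; each statement's English description precedes it below -/
import Mathlib

section
/- For every positive integer $m$ and positive integer $k$, $\sum_{i=1}^{m} (m^2 - i^2)^k \leq \sqrt{\pi/(2k)} \cdot m^{2k+1}$. -/
open Real Finset MeasureTheory

/-!
Since `x ↦ (m² - x²)^k` decreases on `[0, m]`, the sum is at most `∫₀^m (m² - x²)^k dx`.
By `1 - t ≤ e^{-t}` the integrand is at most `m^{2k} e^{-k x² / m²}`, and the full half-line
Gaussian integral of the latter is `m^{2k+1} √(π/k) / 2 = m^{2k+1} √(π/(4k))`.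
-/

lemma AntitoneOn.sum_Icc_le_integral {f : ℝ → ℝ} {n : ℕ} (hf : AntitoneOn f (Set.Icc 0 n)) :
    ∑ i ∈ Icc 1 n, f i ≤ ∫ x in (0 : ℝ)..n, f x := by
  have h := AntitoneOn.sum_le_integral (x₀ := 0) (a := n) (by simpa using hf)
  rw [← Ico_add_one_right_eq_Icc, sum_Ico_eq_sum_range]
  simpa [add_comm] using h

lemma antitoneOn_sq_sub_sq_pow (a : ℝ) (k : ℕ) :
    AntitoneOn (fun x : ℝ => (a ^ 2 - x ^ 2) ^ k) (Set.Icc 0 a) := by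
  intro x ⟨hx0, _⟩ y ⟨_, hya⟩ hxy
  exact pow_le_pow_left₀ (by nlinarith) (by nlinarith) k

lemma sub_le_mul_exp_neg_div {a : ℝ} (ha : 0 < a) (y : ℝ) : a - y ≤ a * exp (-(y / a)) := by
  calc a - y = a * (-(y / a) + 1) := by field_simp; ring
    _ ≤ a * exp (-(y / a)) := by gcongr; exact add_one_le_exp _

lemma sq_sub_sq_pow_le_mul_exp {a x : ℝ} (ha : 0 < a) (hx : x ^ 2 ≤ a ^ 2) (k : ℕ) :
    (a ^ 2 - x ^ 2) ^ k ≤ a ^ (2 * k) * exp (-(k / a ^ 2) * x ^ 2) := by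
  calc (a ^ 2 - x ^ 2) ^ k ≤ (a ^ 2 * exp (-(x ^ 2 / a ^ 2))) ^ k :=
        pow_le_pow_left₀ (by linarith) (sub_le_mul_exp_neg_div (by positivity) _) k
    _ = a ^ (2 * k) * exp (-(k / a ^ 2) * x ^ 2) := by
        rw [mul_pow, ← exp_nat_mul, pow_mul]; ring_nf

lemma intervalIntegral_exp_neg_mul_sq_le {a b : ℝ} (ha : 0 ≤ a) (hb : 0 < b) :
    ∫ x in (0 : ℝ)..a, exp (-b * x ^ 2) ≤ √(π / b) / 2 := by
  rw [intervalIntegral.integral_of_le ha, ← integral_gaussian_Ioi]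
  exact setIntegral_mono_set (integrable_exp_neg_mul_sq hb).integrableOn
    (.of_forall fun _ => (exp_pos _).le) (.of_forall Set.Ioc_subset_Ioi_self)

lemma intervalIntegral_sq_sub_sq_pow_le {a : ℝ} (ha : 0 < a) {k : ℕ} (hk : 0 < k) :
    ∫ x in (0 : ℝ)..a, (a ^ 2 - x ^ 2) ^ k ≤ √(π / k) / 2 * a ^ (2 * k + 1) := by
  have hb : (0 : ℝ) < k / a ^ 2 := by positivity
  calc ∫ x in (0 : ℝ)..a, (a ^ 2 - x ^ 2) ^ k
      ≤ ∫ x in (0 : ℝ)..a, a ^ (2 * k) * exp (-(k / a ^ 2) * x ^ 2) := by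
        refine intervalIntegral.integral_mono_on ha.le
          (Continuous.intervalIntegrable (by fun_prop) _ _)
          (Continuous.intervalIntegrable (by fun_prop) _ _) ?_
        rintro x ⟨hx0, hxa⟩
        exact sq_sub_sq_pow_le_mul_exp ha (by nlinarith) k
    _ ≤ a ^ (2 * k) * (√(π / (k / a ^ 2)) / 2) := by
        rw [intervalIntegral.integral_const_mul]
        gcongr
        exact intervalIntegral_exp_neg_mul_sq_le ha.le hb
    _ = √(π / k) / 2 * a ^ (2 * k + 1) := by
        rw [div_div_eq_mul_div, mul_div_right_comm, sqrt_mul' _ (by positivity), sqrt_sq ha.le]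
        ring

theorem stmt_0 (m k : ℕ) (hm : 0 < m) (hk : 0 < k) :
    ∑ i ∈ Finset.Icc 1 m, ((m : ℝ)^2 - (i : ℝ)^2)^k
      ≤ Real.sqrt (Real.pi / (2 * k)) * (m : ℝ)^(2 * k + 1) := by
  have hm' : (0 : ℝ) < m := by exact_mod_cast hm
  have hconst : √(π / k) / 2 ≤ √(π / (2 * k)) :=
    calc √(π / k) / 2 = √(π / (4 * k)) := by
          rw [show π / (4 * k) = π / k / 2 ^ 2 by ring,
            sqrt_div' (π / k) (by positivity : (0 : ℝ) ≤ 2 ^ 2), sqrt_sq two_pos.le]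
      _ ≤ √(π / (2 * k)) := by gcongr; norm_num
  calc ∑ i ∈ Finset.Icc 1 m, ((m : ℝ)^2 - (i : ℝ)^2)^k
      ≤ ∫ x in (0 : ℝ)..m, ((m : ℝ) ^ 2 - x ^ 2) ^ k :=
        (antitoneOn_sq_sub_sq_pow (m : ℝ) k).sum_Icc_le_integral
    _ ≤ √(π / k) / 2 * (m : ℝ) ^ (2 * k + 1) := intervalIntegral_sq_sub_sq_pow_le hm' hk
    _ ≤ √(π / (2 * k)) * (m : ℝ) ^ (2 * k + 1) := by gcongr
end

section
/- Let $T$ be a finite rooted tree where each node $v$ has an assigned nonnegative integer level $\ell(v)$ such that the level of every child is strictly smaller than the level of its parent. Define the weight of an edge from parent $u$ to a child as $2^{\ell(u)}$, and define $\mathrm{wt}(v)$ as the sum of the weights of all edges in the subtree rooted at $v$. If $T$ has at most $2n$ edges, then $\sum_{v \in T} \mathrm{wt}(v)/2^{\ell(v)} \leq 4n$. -/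
/-!
Exchanging the two sums turns the left-hand side into a sum over edges `w → parent w` of
`∑ 2 ^ ℓ(parent w) / 2 ^ ℓ(v)` over the proper ancestors `v` of `w`. Levels strictly increase
along the path from `w` to the root, so these ancestors have pairwise distinct levels, all at
least `ℓ(parent w)`: each edge contributes at most a geometric series `1 + 1/2 + 1/4 + ⋯ = 2`.
-/

/-- A finite rooted tree, modeled by a parent function: every node reaches the
root by iterating `parent`, and the root is its own parent. -/
structure FinRootedTree (V : Type*) [Fintype V] where
  root : V
  parent : V → V
  parent_root : parent root = root
  reaches_root : ∀ v : V, ∃ n : ℕ, parent^[n] v = root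

/-- `w` belongs to the subtree rooted at `v`. -/
def FinRootedTree.InSubtree {V : Type*} [Fintype V] (T : FinRootedTree V) (v w : V) : Prop :=
  ∃ n : ℕ, T.parent^[n] w = v

open Finset

theorem sum_two_pow_div_two_pow_le_two {ι : Type*} (s : Finset ι) (f : ι → ℕ) (a : ℕ)
    (hinj : Set.InjOn f s) (ha : ∀ i ∈ s, a ≤ f i) :
    ∑ i ∈ s, (2 : ℝ) ^ a / 2 ^ f i ≤ 2 := by
  have hshift : ∀ i ∈ s, (2 : ℝ) ^ a / 2 ^ f i = (1 / 2) ^ (f i - a) := by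
    intro i hi
    rw [← Nat.sub_add_cancel (ha i hi), Nat.add_sub_cancel, pow_add, one_div_pow]
    field_simp
  have hinj' : Set.InjOn (fun i => f i - a) s := fun i hi j hj hij =>
    hinj hi hj (by have := ha i hi; have := ha j hj; simp only at hij; omega)
  calc ∑ i ∈ s, (2 : ℝ) ^ a / 2 ^ f i
      = ∑ k ∈ s.image (fun i => f i - a), (1 / 2 : ℝ) ^ k := by
        rw [sum_image hinj']; exact sum_congr rfl hshift
    _ ≤ ∑' k : ℕ, (1 / 2 : ℝ) ^ k :=
        summable_geometric_two.sum_le_tsum _ fun _ _ => by positivity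
    _ = 2 := tsum_geometric_two

namespace FinRootedTree

variable {V : Type*} [Fintype V] {T : FinRootedTree V}

theorem eq_root_of_inSubtree_root {v : V} (h : T.InSubtree v T.root) : v = T.root := by
  obtain ⟨k, rfl⟩ := h
  exact Function.iterate_fixed T.parent_root k

theorem inSubtree_of_iterate_le {w : V} {j k : ℕ} (hjk : j ≤ k) :
    T.InSubtree (T.parent^[k] w) (T.parent^[j] w) :=
  ⟨k - j, by rw [← Function.iterate_add_apply, Nat.sub_add_cancel hjk]⟩

theorem InSubtree.total {u v w : V} (hu : T.InSubtree u w) (hv : T.InSubtree v w) :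
    T.InSubtree v u ∨ T.InSubtree u v := by
  obtain ⟨j, rfl⟩ := hu
  obtain ⟨k, rfl⟩ := hv
  rcases le_total j k with h | h
  · exact .inl (inSubtree_of_iterate_le h)
  · exact .inr (inSubtree_of_iterate_le h)

variable {ℓ : V → ℕ} (hℓ : ∀ v : V, v ≠ T.root → ℓ v < ℓ (T.parent v))
include hℓ

theorem level_le_level_iterate (v : V) (k : ℕ) : ℓ v ≤ ℓ (T.parent^[k] v) := by
  induction k with
  | zero => rfl
  | succ k ih =>
    rw [Function.iterate_succ_apply']
    refine ih.trans ?_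
    by_cases hr : T.parent^[k] v = T.root
    · rw [hr, T.parent_root]
    · exact (hℓ _ hr).le

theorem level_parent_le_of_inSubtree {v w : V} (h : T.InSubtree v w) (hne : w ≠ v) :
    ℓ (T.parent w) ≤ ℓ v := by
  obtain ⟨k, rfl⟩ := h
  cases k with
  | zero => exact absurd rfl hne
  | succ k => rw [Function.iterate_succ_apply]; exact level_le_level_iterate hℓ _ k

theorem eq_of_inSubtree_of_level_eq {u v : V} (h : T.InSubtree v u) (hlev : ℓ u = ℓ v) :
    u = v := by
  by_cases hr : u = T.root
  · subst hr; exact (eq_root_of_inSubtree_root h).symm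
  by_contra hne
  exact ((hℓ u hr).trans_le (level_parent_le_of_inSubtree hℓ h hne)).ne hlev

theorem level_injOn_ancestors (w : V) : Set.InjOn ℓ {v | T.InSubtree v w} := by
  intro u hu v hv hlev
  rcases hu.total hv with h | h
  · exact eq_of_inSubtree_of_level_eq hℓ h hlev
  · exact (eq_of_inSubtree_of_level_eq hℓ h hlev.symm).symm

variable [DecidableEq V] [∀ v w : V, Decidable (T.InSubtree v w)]

theorem sum_ancestors_level_le_two (w : V) :
    ∑ v ∈ univ.filter (fun v => T.InSubtree v w ∧ w ≠ v),
      (2 : ℝ) ^ ℓ (T.parent w) / 2 ^ ℓ v ≤ 2 := by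
  refine sum_two_pow_div_two_pow_le_two _ ℓ _ ?_ ?_
  · refine (level_injOn_ancestors hℓ w).mono fun v hv => ?_
    exact (mem_filter.1 hv).2.1
  · intro v hv
    obtain ⟨-, hsub, hne⟩ := mem_filter.1 hv
    exact level_parent_le_of_inSubtree hℓ hsub hne

end FinRootedTree

open Finset in
theorem stmt_4 {V : Type*} [Fintype V] [DecidableEq V] (T : FinRootedTree V)
    (ℓ : V → ℕ)
    -- the level of every non-root node is strictly smaller than that of its parent
    (hlevel : ∀ v : V, v ≠ T.root → ℓ v < ℓ (T.parent v))
    [∀ v w : V, Decidable (T.InSubtree v w)]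
    -- `wt v`: sum of the weights `2 ^ ℓ(parent w)` of all edges (from `w` up to its
    -- parent) lying in the subtree rooted at `v`
    (wt : V → ℝ)
    (hwt : ∀ v : V, wt v =
      ∑ w ∈ Finset.univ.filter (fun w => T.InSubtree v w ∧ w ≠ v),
        (2 : ℝ) ^ ℓ (T.parent w))
    (n : ℕ)
    -- the tree has at most `2 n` edges (one edge per non-root node)
    (hedges : Finset.card (Finset.univ.filter (fun w => w ≠ T.root)) ≤ 2 * n) :
    ∑ v : V, wt v / (2 : ℝ) ^ ℓ v ≤ 4 * n := by
  let edgeSum : V → ℝ := fun w =>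
    ∑ v ∈ univ.filter (fun v => T.InSubtree v w ∧ w ≠ v), (2 : ℝ) ^ ℓ (T.parent w) / 2 ^ ℓ v
  calc ∑ v : V, wt v / (2 : ℝ) ^ ℓ v
      = ∑ w : V, edgeSum w := by
        simp only [hwt, sum_div, edgeSum]
        exact sum_comm' fun v w => by simp
    _ = ∑ w ∈ univ.filter (fun w => w ≠ T.root), edgeSum w := by
        refine (sum_filter_of_ne (p := fun w => w ≠ T.root) fun w _ hw hroot => hw ?_).symm
        refine sum_eq_zero fun v hv => ?_
        obtain ⟨-, hsub, hne⟩ := mem_filter.1 hv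
        subst hroot
        exact absurd (FinRootedTree.eq_root_of_inSubtree_root hsub).symm hne
    _ ≤ ∑ w ∈ univ.filter (fun w => w ≠ T.root), (2 : ℝ) :=
        sum_le_sum fun w _ => FinRootedTree.sum_ancestors_level_le_two hlevel w
    _ ≤ 4 * n := by
        rw [sum_const, nsmul_eq_mul]
        have : ((univ.filter (fun w => w ≠ T.root)).card : ℝ) ≤ 2 * n := by exact_mod_cast hedges
        linarith
end

section
/- Fix $\epsilon \in (0,1/2]$ with $k = 1/\epsilon^2 \in \mathbb{N}$, $k \le n$. Let $a, a' \in \{0,1\}^n$ be two distinct vectors each with exactly $k$ ones. Then there exists an index $i$ such that the two distances $\|\frac{1}{\sqrt k} a - e_i\|_2$ and $\|\frac{1}{\sqrt k} a' - e_i\|_2$ differ by a multiplicative factor of more than $(1 + \epsilon/4)$: specifically, one of them equals $\sqrt{2}$ and the other equals $\sqrt{2 - 2\epsilon}$, and $\sqrt{2}/\sqrt{2-2\epsilon} > 1 + \epsilon/4$. -/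
open Real

namespace EuclideanSpace

variable {ι : Type*} [Fintype ι]

lemma norm_sub_single_one_sq [DecidableEq ι] (x : EuclideanSpace ℝ ι) (i : ι) :
    ‖x - single i (1 : ℝ)‖ ^ 2 = ‖x‖ ^ 2 - 2 * x i + 1 := by
  rw [norm_sub_sq_real, inner_single_right, PiLp.norm_single, norm_one]
  simp

lemma norm_sq_eq_card_of_zero_or_one (b : EuclideanSpace ℝ ι) (hb : ∀ j, b j = 0 ∨ b j = 1) :
    ‖b‖ ^ 2 = (Finset.univ.filter (fun j => b j = 1)).card := by
  rw [norm_sq_eq, Finset.natCast_card_filter]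
  refine Finset.sum_congr rfl fun j _ => ?_
  rcases hb j with h | h <;> simp [h]

/-- Here `b / √k = ε • b` is a unit vector whose inner product with `eᵢ` is `ε * b i`. -/
lemma norm_smul_sub_single_of_zero_or_one [DecidableEq ι] {k : ℕ} {ε : ℝ} (hε : 0 < ε)
    (hk : (k : ℝ) = 1 / ε ^ 2) (b : EuclideanSpace ℝ ι) (hb : ∀ j, b j = 0 ∨ b j = 1)
    (hcard : (Finset.univ.filter (fun j => b j = 1)).card = k) (i : ι) :
    ‖(1 / √k) • b - single i (1 : ℝ)‖ = √(2 - 2 * ε * b i) := by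
  have hscale : 1 / √k = ε := by
    rw [hk, sqrt_div' _ (sq_nonneg ε), sqrt_one, sqrt_sq hε.le, one_div_one_div]
  rw [← sqrt_sq (norm_nonneg _), norm_sub_single_one_sq, hscale, norm_smul,
    Real.norm_of_nonneg hε.le, mul_pow, norm_sq_eq_card_of_zero_or_one b hb, hcard, hk]
  congr 1
  simp only [PiLp.smul_apply, smul_eq_mul]
  field_simp
  ring

end EuclideanSpace

lemma one_add_div_four_lt_sqrt_two_div {ε : ℝ} (hε0 : 0 < ε) (hε1 : ε < 1) :
    1 + ε / 4 < √2 / √(2 - 2 * ε) := by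
  have hpos : 0 < 2 - 2 * ε := by linarith
  rw [lt_div_iff₀ (sqrt_pos.2 hpos), ← sqrt_sq (by positivity : 0 ≤ 1 + ε / 4),
    ← sqrt_mul (by positivity)]
  exact sqrt_lt_sqrt (by positivity) (by nlinarith [mul_pos hε0 hε0, pow_pos hε0 3])

theorem stmt_10_general (n k : ℕ) (ε : ℝ) (hε0 : 0 < ε) (hε : ε ≤ 1 / 2)
    (hk : (k : ℝ) = 1 / ε ^ 2)
    (a a' : EuclideanSpace ℝ (Fin n))
    (ha01 : ∀ j, a j = 0 ∨ a j = 1) (ha'01 : ∀ j, a' j = 0 ∨ a' j = 1)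
    (hsparse : (Finset.univ.filter (fun j => a j = 1)).card = k)
    (hsparse' : (Finset.univ.filter (fun j => a' j = 1)).card = k)
    (hne : a ≠ a') :
    ∃ i : Fin n,
      ((‖(1 / Real.sqrt k) • a - EuclideanSpace.single i (1 : ℝ)‖ = Real.sqrt 2 ∧
        ‖(1 / Real.sqrt k) • a' - EuclideanSpace.single i (1 : ℝ)‖ = Real.sqrt (2 - 2 * ε)) ∨
       (‖(1 / Real.sqrt k) • a - EuclideanSpace.single i (1 : ℝ)‖ = Real.sqrt (2 - 2 * ε) ∧
        ‖(1 / Real.sqrt k) • a' - EuclideanSpace.single i (1 : ℝ)‖ = Real.sqrt 2)) ∧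
      Real.sqrt 2 / Real.sqrt (2 - 2 * ε) > 1 + ε / 4 := by
  obtain ⟨i, hi⟩ : ∃ i, a i ≠ a' i := by
    by_contra! h
    exact hne (PiLp.ext h)
  refine ⟨i, ?_, one_add_div_four_lt_sqrt_two_div hε0 (by linarith)⟩
  rw [EuclideanSpace.norm_smul_sub_single_of_zero_or_one hε0 hk a ha01 hsparse,
    EuclideanSpace.norm_smul_sub_single_of_zero_or_one hε0 hk a' ha'01 hsparse']
  rcases ha01 i with h | h <;> rcases ha'01 i with h' | h' <;> simp_all

theorem stmt_10 (n k : ℕ) (ε : ℝ) (hε0 : 0 < ε) (hε : ε ≤ 1 / 2)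
    (hk : (k : ℝ) = 1 / ε ^ 2) (hkn : k ≤ n)
    (a a' : EuclideanSpace ℝ (Fin n))
    (ha01 : ∀ j, a j = 0 ∨ a j = 1) (ha'01 : ∀ j, a' j = 0 ∨ a' j = 1)
    (hsparse : (Finset.univ.filter (fun j => a j = 1)).card = k)
    (hsparse' : (Finset.univ.filter (fun j => a' j = 1)).card = k)
    (hne : a ≠ a') :
    ∃ i : Fin n,
      ((‖(1 / Real.sqrt k) • a - EuclideanSpace.single i (1 : ℝ)‖ = Real.sqrt 2 ∧
        ‖(1 / Real.sqrt k) • a' - EuclideanSpace.single i (1 : ℝ)‖ = Real.sqrt (2 - 2 * ε)) ∨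
       (‖(1 / Real.sqrt k) • a - EuclideanSpace.single i (1 : ℝ)‖ = Real.sqrt (2 - 2 * ε) ∧
        ‖(1 / Real.sqrt k) • a' - EuclideanSpace.single i (1 : ℝ)‖ = Real.sqrt 2)) ∧
      Real.sqrt 2 / Real.sqrt (2 - 2 * ε) > 1 + ε / 4 :=
  stmt_10_general n k ε hε0 hε hk a a' ha01 ha'01 hsparse hsparse' hne
end
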